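/- arXiv:1401.8151 — 11 statements merged into one kernel-verified Lean document; each statement's English description precedes it below -/
import Mathlib

section
/- Let (N, A, P) be an instance of a-GASP with a single activity a, let 1 ≤ k ≤ n−1, and define U_1 = {i : k ∈ S'_i, k+1 ∉ S'_i}, U_2 = {i : k ∉ S'_i, k+1 ∈ S'_i}, U_3 = {i : k ∈ S'_i, k+1 ∈ S'_i}, where S'_i = {m : (a,m) ∈ S_i}. Then there exists a Nash stable assignment π with |π^a| = k if and only if |U_1| + |U_3| ≥ k, |U_3| ≤ k, and U_2 = ∅. -/
/-- The group of agents assigned to activity `a` under assignment `π`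
(`none` stands for the void activity `a_∅`). -/
def grp {ι α : Type*} [Fintype ι] [DecidableEq α] (π : ι → Option α) (a : α) : Finset ι :=
  Finset.univ.filter (fun i => π i = some a)

/-- An assignment is individually rational if every agent assigned to a non-void
activity `a` approves the alternative `(a, size of the group doing a)`.
`S i a` is the set of group sizes `k` such that agent `i` approves `(a, k)`. -/
def IndivRat {ι α : Type*} [Fintype ι] [DecidableEq α]
    (S : ι → α → Finset ℕ) (π : ι → Option α) : Prop :=
  ∀ i a, π i = some a → (grp π a).card ∈ S i a

/-- Nash stability: individual rationality plus no agent assigned to the void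
activity approves joining an existing group. -/
def NashStable {ι α : Type*} [Fintype ι] [DecidableEq α]
    (S : ι → α → Finset ℕ) (π : ι → Option α) : Prop :=
  IndivRat S π ∧ ∀ i a, π i = none → (grp π a).card + 1 ∉ S i a

/-- The number of agents assigned to a non-void activity. -/
def numActive {ι α : Type*} [Fintype ι] [DecidableEq α] (π : ι → Option α) : ℕ :=
  (Finset.univ.filter (fun i => π i ≠ none)).card

/-- Single-activity a-GASP, 1 ≤ k ≤ n-1: a Nash stable assignment with exactly
k agents assigned to the activity exists iff |U₁| + |U₃| ≥ k, |U₃| ≤ k and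
U₂ = ∅, where U₁ = {i : k ∈ S'_i, k+1 ∉ S'_i}, U₂ = {i : k ∉ S'_i, k+1 ∈ S'_i},
U₃ = {i : k ∈ S'_i, k+1 ∈ S'_i}. -/
theorem stmt5 (n k : ℕ) (hk1 : 1 ≤ k) (hk2 : k ≤ n - 1) (S : Fin n → Unit → Finset ℕ) :
    (∃ π : Fin n → Option Unit, NashStable S π ∧ (grp π ()).card = k) ↔
      (k ≤ (Finset.univ.filter (fun i : Fin n => k ∈ S i () ∧ k + 1 ∉ S i ())).card
          + (Finset.univ.filter (fun i : Fin n => k ∈ S i () ∧ k + 1 ∈ S i ())).card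
        ∧ (Finset.univ.filter (fun i : Fin n => k ∈ S i () ∧ k + 1 ∈ S i ())).card ≤ k
        ∧ Finset.univ.filter (fun i : Fin n => k ∉ S i () ∧ k + 1 ∈ S i ()) = ∅) := by
  set U1 := Finset.univ.filter (fun i : Fin n => k ∈ S i () ∧ k + 1 ∉ S i ()) with hU1
  set U3 := Finset.univ.filter (fun i : Fin n => k ∈ S i () ∧ k + 1 ∈ S i ()) with hU3
  have hdisj : Disjoint U1 U3 := by
    rw [Finset.disjoint_left]
    intro i h1 h3
    exact (Finset.mem_filter.1 h1).2.2 (Finset.mem_filter.1 h3).2.2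
  constructor
  · rintro ⟨π, ⟨hIR, hNS⟩, hcard⟩
    have hmem : ∀ i, i ∈ grp π () ↔ π i = some () := by
      intro i; simp [grp]
    have hgrp : ∀ i, i ∈ grp π () → k ∈ S i () := by
      intro i hi
      rw [hmem] at hi
      have := hIR i () hi
      rwa [hcard] at this
    have hout : ∀ i, i ∉ grp π () → k + 1 ∉ S i () := by
      intro i hi
      have : π i = none := by
        rw [hmem] at hi
        cases h : π i with
        | none => rfl
        | some a => cases a; exact absurd h hi
      have := hNS i () this
      rwa [hcard] at this
    refine ⟨?_, ?_, ?_⟩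
    · have hsub : grp π () ⊆ U1 ∪ U3 := by
        intro i hi
        have h1 := hgrp i hi
        by_cases h2 : k + 1 ∈ S i ()
        · exact Finset.mem_union_right _ (by simp [hU3, h1, h2])
        · exact Finset.mem_union_left _ (by simp [hU1, h1, h2])
      calc k = (grp π ()).card := hcard.symm
        _ ≤ (U1 ∪ U3).card := Finset.card_le_card hsub
        _ ≤ U1.card + U3.card := Finset.card_union_le _ _
    · have hsub : U3 ⊆ grp π () := by
        intro i hi
        simp only [hU3, Finset.mem_filter] at hi
        by_contra h
        exact hout i h hi.2.2
      calc U3.card ≤ (grp π ()).card := Finset.card_le_card hsub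
        _ = k := hcard
    · rw [Finset.eq_empty_iff_forall_notMem]
      intro i hi
      simp only [Finset.mem_filter] at hi
      by_cases h : i ∈ grp π ()
      · exact hi.2.1 (hgrp i h)
      · exact hout i h hi.2.2
  · rintro ⟨h1, h2, h3⟩
    have hcard13 : (U1 ∪ U3).card = U1.card + U3.card :=
      Finset.card_union_of_disjoint hdisj
    obtain ⟨T, hT3, hTsub, hTcard⟩ :=
      Finset.exists_subsuperset_card_eq (Finset.subset_union_right) h2
        (by rw [hcard13]; exact h1)
    refine ⟨fun i => if i ∈ T then some () else none, ⟨?_, ?_⟩, ?_⟩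
    · intro i a hi
      have hiT : i ∈ T := by by_contra h; simp [h] at hi
      have hgrpT : grp (fun i => if i ∈ T then some () else none) a = T := by
        ext j; cases a; simp [grp]
      rw [hgrpT, hTcard]
      have := hTsub hiT
      cases a
      simp only [hU1, hU3, Finset.mem_union, Finset.mem_filter] at this
      rcases this with h | h <;> exact h.2.1
    · intro i a hi
      have hiT : i ∉ T := by by_contra h; simp [h] at hi
      have hgrpT : grp (fun i => if i ∈ T then some () else none) a = T := by
        ext j; cases a; simp [grp]
      rw [hgrpT, hTcard]
      cases a
      intro hmem
      by_cases hk : k ∈ S i ()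
      · exact hiT (hT3 (by simp [hU3, hk, hmem]))
      · have : i ∈ Finset.univ.filter (fun i : Fin n => k ∉ S i () ∧ k + 1 ∈ S i ()) := by
          simp [hk, hmem]
        rw [h3] at this
        exact absurd this (Finset.notMem_empty i)
    · have hgrpT : grp (fun i => if i ∈ T then some () else none) () = T := by
        ext j; simp [grp]
      rw [hgrpT, hTcard]
end

section
/- In an instance of a-GASP where every agent has increasing preferences, every individually rational assignment that is not Nash stable can be modified, by reassigning a single agent from the void activity to some non-void activity, into an individually rational assignment with strictly more agents assigned to non-void activities. Consequently, every increasing instance of a-GASP admits a Nash stable assignment. -/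
/-- In an increasing a-GASP instance (each agent's approved group sizes for each
activity form an up-set [ℓ, n]), every individually rational assignment that is
not Nash stable can be improved by moving a single agent from the void activity
to a non-void one, strictly increasing the number of active agents while keeping
individual rationality. Consequently a Nash stable assignment exists. -/
theorem stmt6 {ι α : Type*} [Fintype ι] [DecidableEq ι] [DecidableEq α] [Fintype α]
    (S : ι → α → Finset ℕ)
    (hinc : ∀ (i : ι) (a : α), ∃ l : ℕ, 1 ≤ l ∧ S i a = Finset.Icc l (Fintype.card ι)) :
    (∀ π : ι → Option α, IndivRat S π → ¬ NashStable S π →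
        ∃ (i : ι) (a : α), π i = none ∧
          IndivRat S (Function.update π i (some a)) ∧
          numActive π < numActive (Function.update π i (some a))) ∧
      ∃ π : ι → Option α, NashStable S π := by
  have key : ∀ π : ι → Option α, IndivRat S π → ¬ NashStable S π →
      ∃ (i : ι) (a : α), π i = none ∧
        IndivRat S (Function.update π i (some a)) ∧
        numActive π < numActive (Function.update π i (some a)) := by
    intro π hIR hNS
    rw [NashStable] at hNS
    push_neg at hNS
    obtain ⟨i, a, hi, ha⟩ := hNS hIR
    have hinot : i ∉ grp π a := by simp [grp, hi]
    have hgrpa : grp (Function.update π i (some a)) a = insert i (grp π a) := by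
      ext j
      by_cases hj : j = i <;> simp [grp, Function.update, hj]
    have hcarda : (grp (Function.update π i (some a)) a).card = (grp π a).card + 1 := by
      rw [hgrpa, Finset.card_insert_of_notMem hinot]
    have hgrpb : ∀ b, b ≠ a → grp (Function.update π i (some a)) b = grp π b := by
      intro b hb
      ext j
      by_cases hj : j = i <;> simp [grp, Function.update, hj, hi, Ne.symm hb]
    refine ⟨i, a, hi, ?_, ?_⟩
    · intro j b hj
      by_cases hji : j = i
      · subst hji
        rw [Function.update_self] at hj
        obtain rfl : a = b := by injection hj
        rw [hcarda]; exact ha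
      · rw [Function.update_of_ne hji] at hj
        by_cases hb : b = a
        · subst hb
          rw [hcarda]
          obtain ⟨l, hl1, hl⟩ := hinc j b
          have h1 := hIR j b hj
          rw [hl, Finset.mem_Icc] at h1 ⊢
          have hle : (grp (Function.update π i (some b)) b).card ≤ Fintype.card ι :=
            Finset.card_le_univ _
          rw [hcarda] at hle
          exact ⟨h1.1.trans (Nat.le_succ _), hle⟩
        · rw [hgrpb b hb]; exact hIR j b hj
    · have : Finset.univ.filter (fun j => Function.update π i (some a) j ≠ none)
          = insert i (Finset.univ.filter (fun j => π j ≠ none)) := by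
        ext j
        by_cases hj : j = i <;> simp [Function.update, hj, hi]
      rw [numActive, numActive, this, Finset.card_insert_of_notMem (by simp [hi])]
      exact Nat.lt_succ_self _
  refine ⟨key, ?_⟩
  have main : ∀ k : ℕ, ∀ π : ι → Option α, IndivRat S π →
      Fintype.card ι ≤ numActive π + k → ∃ π' : ι → Option α, NashStable S π' := by
    intro k
    induction k with
    | zero =>
      intro π hIR hcard
      refine ⟨π, hIR, ?_⟩
      intro i a hi
      exfalso
      have hfull : Finset.univ.filter (fun j => π j ≠ none) = Finset.univ := by
        apply Finset.eq_univ_of_card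
        exact le_antisymm (Finset.card_le_univ _) (by simpa [numActive] using hcard)
      have : i ∈ Finset.univ.filter (fun j => π j ≠ none) := by rw [hfull]; exact Finset.mem_univ i
      simp [hi] at this
    | succ k ih =>
      intro π hIR hcard
      by_cases hNS : NashStable S π
      · exact ⟨π, hNS⟩
      · obtain ⟨i, a, _, hIR', hlt⟩ := key π hIR hNS
        exact ih _ hIR' (by omega)
  refine main (Fintype.card ι) (fun _ => none) ?_ ?_
  · intro i a hi; simp at hi
  · simp [numActive]
end

section
/- Every decreasing instance of a-GASP admits a Nash stable assignment. -/
/-!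
The sum, over the agents doing a non-void activity `a`, of their thresholds `u_i^a` is a
potential. Take an individually rational assignment maximising it. If a void agent `i`
approved joining the group of `a`, with `k` members, then either every member also approves
size `k + 1`, and `i` can join, or some member `j` has threshold at most `k`, and `i` (whose
threshold is at least `k + 1`) can take `j`'s place. Both moves keep individual rationality
and strictly increase the potential.
-/

open Finset Function

section

variable {ι α : Type*} [Fintype ι]

lemma mem_iff_le_card_of_eq_Icc {s : Finset ℕ} {u : ℕ} (hs : s = Icc 1 u) {k : ℕ} :
    k ∈ s ↔ 1 ≤ k ∧ k ≤ s.card := by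
  subst hs
  rw [Nat.card_Icc, Nat.add_sub_cancel, mem_Icc]

/-- `u_i^a` is recovered as `(S i a).card`, and a void agent contributes `0`. -/
def threshold (S : ι → α → Finset ℕ) (i : ι) (o : Option α) : ℕ :=
  o.elim 0 fun a => (S i a).card

def totalThreshold (S : ι → α → Finset ℕ) (π : ι → Option α) : ℕ :=
  ∑ i, threshold S i (π i)

variable {S : ι → α → Finset ℕ}

lemma totalThreshold_update_add [DecidableEq ι] (π : ι → Option α) (i : ι) (v : Option α) :
    totalThreshold S (update π i v) + threshold S i (π i) =
      totalThreshold S π + threshold S i v := by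
  simp only [totalThreshold, apply_update (threshold S),
    sum_update_of_mem (mem_univ i), ← add_sum_erase _ _ (mem_univ i), sdiff_singleton_eq_erase]
  ring

lemma totalThreshold_comp_swap_add [DecidableEq ι] {π : ι → Option α} {i j : ι} {a : α}
    (hi : π i = none) (hj : π j = some a) :
    totalThreshold S (π ∘ Equiv.swap i j) + (S j a).card =
      totalThreshold S π + (S i a).card := by
  have hupd := totalThreshold_update_add (S := S) π j none
  have hupd' := totalThreshold_update_add (S := S) (update π j none) i (some a)
  rw [update_of_ne (by rintro rfl; simp_all), hi] at hupd'
  rw [hj] at hupd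
  rw [Equiv.comp_swap_eq_update, hi, hj]
  simp only [threshold, Option.elim_none, Option.elim_some] at hupd hupd' ⊢
  omega

variable [DecidableEq α]

lemma card_grp_comp_perm (π : ι → Option α) (σ : Equiv.Perm ι) (b : α) :
    (grp (π ∘ σ) b).card = (grp π b).card :=
  card_equiv σ fun m => by simp [grp]

variable [DecidableEq ι]

lemma grp_update_some_of_eq_none {π : ι → Option α} {i : ι} (hi : π i = none) (a b : α) :
    grp (update π i (some a)) b = if a = b then insert i (grp π b) else grp π b := by
  ext m
  rcases eq_or_ne m i with rfl | hm
  · split_ifs <;> simp_all [grp]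
  · split_ifs <;> simp [grp, hm]

lemma IndivRat.update_some {π : ι → Option α} (hπ : IndivRat S π) {i : ι} {a : α}
    (hi : π i = none) (hia : (grp π a).card + 1 ∈ S i a)
    (hgrp : ∀ j ∈ grp π a, (grp π a).card + 1 ∈ S j a) :
    IndivRat S (update π i (some a)) := by
  intro m b hm
  rw [grp_update_some_of_eq_none hi]
  rcases eq_or_ne m i with rfl | hmi
  · obtain rfl : a = b := by simpa using hm
    simpa [card_insert_of_notMem, grp, hi] using hia
  · rw [update_of_ne hmi] at hm
    split_ifs with hab
    · subst hab
      rw [card_insert_of_notMem (by simp [grp, hi])]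
      exact hgrp m (by simp [grp, hm])
    · exact hπ m b hm

lemma IndivRat.comp_swap {π : ι → Option α} (hπ : IndivRat S π) {i j : ι} {a : α}
    (hi : π i = none) (hj : π j = some a) (hia : (grp π a).card ∈ S i a) :
    IndivRat S (π ∘ Equiv.swap i j) := by
  intro m b hm
  rw [card_grp_comp_perm]
  rcases eq_or_ne m i with rfl | hmi
  · obtain rfl : a = b := by simpa [hj] using hm
    exact hia
  rcases eq_or_ne m j with rfl | hmj
  · simp [hi] at hm
  · rw [comp_apply, Equiv.swap_apply_of_ne_of_ne hmi hmj] at hm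
    exact hπ m b hm

lemma exists_indivRat_totalThreshold_lt {a : α} (hdec : ∀ j, ∃ u : ℕ, S j a = Icc 1 u)
    {π : ι → Option α} (hπ : IndivRat S π) {i : ι} (hi : π i = none)
    (hia : (grp π a).card + 1 ∈ S i a) :
    ∃ π', IndivRat S π' ∧ totalThreshold S π < totalThreshold S π' := by
  have hdown : ∀ j k, k ∈ S j a ↔ 1 ≤ k ∧ k ≤ (S j a).card := fun j _ =>
    mem_iff_le_card_of_eq_Icc (hdec j).choose_spec
  by_cases hall : ∀ j ∈ grp π a, (grp π a).card + 1 ∈ S j a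
  · refine ⟨_, hπ.update_some hi hia hall, ?_⟩
    have hupd := totalThreshold_update_add (S := S) π i (some a)
    rw [hi] at hupd
    simp only [threshold, Option.elim_none, Option.elim_some] at hupd
    have := (hdown i _).1 hia
    omega
  · push Not at hall
    obtain ⟨j, hjgrp, hja⟩ := hall
    have hj : π j = some a := by simpa [grp] using hjgrp
    have hk : 1 ≤ (grp π a).card := card_pos.2 ⟨j, hjgrp⟩
    have hia' := (hdown i _).1 hia
    refine ⟨_, hπ.comp_swap hi hj ((hdown i _).2 ⟨hk, by omega⟩), ?_⟩
    have hswap := totalThreshold_comp_swap_add (S := S) hi hj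
    have := (hdown j _).not.1 hja
    omega

end

/-- Every decreasing a-GASP instance (each agent's approved group sizes for each
activity form a down-set [1, u]) admits a Nash stable assignment. -/
theorem stmt7 {ι α : Type*} [Fintype ι] [DecidableEq ι] [DecidableEq α] [Fintype α]
    (S : ι → α → Finset ℕ)
    (hdec : ∀ (i : ι) (a : α), ∃ u : ℕ, S i a = Finset.Icc 1 u) :
    ∃ π : ι → Option α, NashStable S π := by
  classical
  have hvoid : IndivRat S (fun _ : ι => (none : Option α)) := by
    intro i a h
    simp at h
  obtain ⟨π, hπ, hmax⟩ := exists_max_image (univ.filter (IndivRat S)) (totalThreshold S)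
    ⟨_, mem_filter.2 ⟨mem_univ _, hvoid⟩⟩
  rw [mem_filter] at hπ
  refine ⟨π, hπ.2, fun i a hi hia => ?_⟩
  obtain ⟨π', hπ', hlt⟩ := exists_indivRat_totalThreshold_lt (hdec · a) hπ.2 hi hia
  exact (hmax π' (mem_filter.2 ⟨mem_univ _, hπ'⟩)).not_gt hlt
end

section
/- Every mixed increasing-decreasing instance of a-GASP admits a Nash stable assignment. -/
/-!
Among the individually rational assignments (the all-void one is one of them) take one
maximising `approvalPotential`: each agent assigned to `a` contributes `(S i a).sup id`, the
largest size at which it approves `a`. Suppose a void agent `i` approves joining `a`, whose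
group has size `k`; then `(S i a).sup id ≥ k + 1`. If every member of `a` approved `k + 1`,
letting `i` join would raise the potential, so some member `j` rejects `k + 1`. For `a ∈ A⁺`
this is impossible, as `j` approves `k` and `k < n`. For `a ∈ A⁻` the member `j` approves
exactly the sizes `[1, k]` while `i` approves `k`, so replacing `j` by `i` keeps the assignment
individually rational and raises the potential by `(S i a).sup id - k ≥ 1`.
-/
theorem Finset.sum_apply_update_add {ι β M : Type*} [Fintype ι] [DecidableEq ι]
    [AddCommMonoid M] (g : ι → β → M) (f : ι → β) (i : ι) (b : β) :
    ∑ x, g x (Function.update f i b x) + g i (f i) = ∑ x, g x (f x) + g i b := by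
  simp_rw [Function.apply_update (fun x => g x), Finset.sum_update_of_mem (Finset.mem_univ i),
    ← Finset.add_sum_erase _ _ (Finset.mem_univ i), Finset.sdiff_singleton_eq_erase]
  ac_rfl

section Assignment

variable {ι α : Type*} [Fintype ι] {S : ι → α → Finset ℕ} {π : ι → Option α} {i j : ι} {a : α}

def approvalPotential (S : ι → α → Finset ℕ) (π : ι → Option α) : ℕ :=
  ∑ x, (π x).elim 0 fun b => (S x b).sup id

theorem approvalPotential_update [DecidableEq ι] (x : Option α) :
    approvalPotential S (Function.update π i x) + (π i).elim 0 (fun b => (S i b).sup id) =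
      approvalPotential S π + x.elim 0 (fun b => (S i b).sup id) :=
  Finset.sum_apply_update_add (fun y o => o.elim 0 fun b => (S y b).sup id) π i x

variable [DecidableEq α]

theorem mem_grp : i ∈ grp π a ↔ π i = some a := by
  simp [grp]

theorem card_grp_lt_card (hi : π i = none) : (grp π a).card < Fintype.card ι :=
  Finset.card_lt_univ_of_notMem (x := i) (by simp [mem_grp, hi])

theorem IndivRat.of_grp_eq {π' : ι → Option α} (hπ : IndivRat S π)
    (heq : ∀ b ≠ a, grp π' b = grp π b) (ha : ∀ j ∈ grp π' a, (grp π' a).card ∈ S j a) :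
    IndivRat S π' := by
  intro j b hj
  by_cases hb : b = a
  · subst hb; exact ha j (mem_grp.2 hj)
  · rw [heq b hb]
    exact hπ j b (by rw [← mem_grp, ← heq b hb, mem_grp]; exact hj)

variable [DecidableEq ι]

theorem grp_update (x : Option α) :
    grp (Function.update π i x) a =
      if x = some a then insert i (grp π a) else (grp π a).erase i := by
  ext y
  by_cases hy : y = i <;> split_ifs <;> simp_all [mem_grp]

theorem grp_update_of_ne {b : α} (x : Option α) (hi : π i = none) (hb : x ≠ some b) :
    grp (Function.update π i x) b = grp π b := by
  rw [grp_update, if_neg hb]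
  exact Finset.erase_eq_of_notMem (by simp [mem_grp, hi])

theorem IndivRat.update_join (hπ : IndivRat S π) (hi : π i = none)
    (happ : ∀ j ∈ insert i (grp π a), (grp π a).card + 1 ∈ S j a) :
    IndivRat S (Function.update π i (some a)) := by
  have hgrp : grp (Function.update π i (some a)) a = insert i (grp π a) := by
    rw [grp_update, if_pos rfl]
  refine hπ.of_grp_eq (fun b hb => grp_update_of_ne _ hi (by simpa using hb.symm)) ?_
  rw [hgrp, Finset.card_insert_of_notMem (by simp [mem_grp, hi])]
  exact happ

theorem IndivRat.update_swap (hπ : IndivRat S π) (hi : π i = none) (hj : π j = some a)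
    (happ : (grp π a).card ∈ S i a) :
    IndivRat S (Function.update (Function.update π j none) i (some a)) := by
  have hπ₁i : Function.update π j none i = none := by
    rw [Function.update_apply]; split_ifs <;> simp [hi]
  have hgrp : grp (Function.update (Function.update π j none) i (some a)) a =
      insert i ((grp π a).erase j) := by
    rw [grp_update, if_pos rfl, grp_update, if_neg (by simp)]
  have hj_mem : j ∈ grp π a := mem_grp.2 hj
  refine hπ.of_grp_eq (a := a) (fun b hb => ?_) ?_
  · rw [grp_update_of_ne _ hπ₁i (by simpa using hb.symm), grp_update, if_neg (by simp)]
    exact Finset.erase_eq_of_notMem (by simp [mem_grp, hj, hb.symm])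
  · have hi_mem : i ∉ (grp π a).erase j := by simp [mem_grp, hi]
    rw [hgrp, Finset.card_insert_of_notMem hi_mem, Finset.card_erase_add_one hj_mem]
    intro y hy
    rcases Finset.mem_insert.1 hy with rfl | hy
    · exact happ
    · exact hπ y a (mem_grp.1 (Finset.mem_of_mem_erase hy))

theorem exists_indivRat_forall_approvalPotential_le [Fintype α] (S : ι → α → Finset ℕ) :
    ∃ π, IndivRat S π ∧
      ∀ π', IndivRat S π' → approvalPotential S π' ≤ approvalPotential S π := by
  classical
  obtain ⟨π, hπ, hmax⟩ := (Finset.univ.filter (IndivRat S)).exists_max_image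
    (approvalPotential S) ⟨fun _ => none, by simp [IndivRat]⟩
  exact ⟨π, (Finset.mem_filter.1 hπ).2, fun π' h => hmax π' (by simp [h])⟩

section Maximal

variable (hπ : IndivRat S π)
  (hmax : ∀ π', IndivRat S π' → approvalPotential S π' ≤ approvalPotential S π)
include hπ hmax

theorem exists_mem_grp_not_mem_of_forall_approvalPotential_le (hi : π i = none)
    (happ : (grp π a).card + 1 ∈ S i a) : ∃ j ∈ grp π a, (grp π a).card + 1 ∉ S j a := by
  by_contra! hall
  have hle := hmax _ (hπ.update_join hi (Finset.forall_mem_insert _ _ _ |>.2 ⟨happ, hall⟩))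
  have hpot := approvalPotential_update (S := S) (π := π) (i := i) (some a)
  have hpos : 0 < (S i a).sup id := Nat.succ_pos _ |>.trans_le (Finset.le_sup (f := id) happ)
  rw [hi, Option.elim_none, Option.elim_some] at hpot
  omega

theorem sup_le_of_forall_approvalPotential_le (hi : π i = none) (hj : π j = some a)
    (happ : (grp π a).card ∈ S i a) : (S i a).sup id ≤ (S j a).sup id := by
  have hij : i ≠ j := by rintro rfl; simp [hi] at hj
  have hle := hmax _ (hπ.update_swap hi hj happ)
  have h₁ := approvalPotential_update (S := S) (π := π) (i := j) none
  have h₂ := approvalPotential_update (S := S) (π := Function.update π j none) (i := i) (some a)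
  rw [hj, Option.elim_none, Option.elim_some] at h₁
  rw [Function.update_of_ne hij, hi, Option.elim_none, Option.elim_some] at h₂
  omega

end Maximal

end Assignment

theorem stmt8_general {ι α : Type*} [Fintype ι] [DecidableEq α] [Fintype α]
    (S : ι → α → Finset ℕ) (Apos : α → Prop)
    (hinc : ∀ (i : ι) (a : α), Apos a →
      ∃ l : ℕ, 1 ≤ l ∧ S i a = Finset.Icc l (Fintype.card ι))
    (hdec : ∀ (i : ι) (a : α), ¬ Apos a → ∃ u : ℕ, S i a = Finset.Icc 1 u) :
    ∃ π : ι → Option α, NashStable S π := by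
  classical
  obtain ⟨π, hπ, hmax⟩ := exists_indivRat_forall_approvalPotential_le S
  refine ⟨π, hπ, fun i a hi happ => ?_⟩
  obtain ⟨j, hj, hrej⟩ := exists_mem_grp_not_mem_of_forall_approvalPotential_le hπ hmax hi happ
  have hjk := hπ j a (mem_grp.1 hj)
  by_cases ha : Apos a
  · obtain ⟨l, -, hl⟩ := hinc j a ha
    have := card_grp_lt_card (a := a) hi
    simp only [hl, Finset.mem_Icc] at hjk hrej
    omega
  · have hi_sup : (grp π a).card + 1 ≤ (S i a).sup id := Finset.le_sup (f := id) happ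
    obtain ⟨u, hu⟩ := hdec j a ha
    obtain ⟨v, hv⟩ := hdec i a ha
    rw [hv, Finset.mem_Icc] at happ
    simp only [hu, Finset.mem_Icc] at hjk hrej
    have hswap := sup_le_of_forall_approvalPotential_le hπ hmax hi (mem_grp.1 hj)
      (by rw [hv, Finset.mem_Icc]; omega)
    have hj_sup : (S j a).sup id ≤ (grp π a).card :=
      Finset.sup_le fun m hm => by rw [hu, Finset.mem_Icc] at hm; exact hm.2.trans (by omega)
    omega

/-- Every mixed increasing-decreasing a-GASP instance (activities split into
A⁺ and A⁻; approved sizes are up-sets [ℓ, n] for activities in A⁺ and down-sets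
[1, u] for activities in A⁻) admits a Nash stable assignment. -/
theorem stmt8 {ι α : Type*} [Fintype ι] [DecidableEq ι] [DecidableEq α] [Fintype α]
    (S : ι → α → Finset ℕ) (Apos : α → Prop)
    (hinc : ∀ (i : ι) (a : α), Apos a →
      ∃ l : ℕ, 1 ≤ l ∧ S i a = Finset.Icc l (Fintype.card ι))
    (hdec : ∀ (i : ι) (a : α), ¬ Apos a → ∃ u : ℕ, S i a = Finset.Icc 1 u) :
    ∃ π : ι → Option α, NashStable S π :=
  stmt8_general S Apos hinc hdec
end

section
/- Let (N, A, P) be a decreasing instance of a-GASP where A* consists of k pairwise equivalent copies of one activity, so that each agent i is characterized by a threshold u_i ∈ {0,…,n}: agent i approves (a_j, m) iff m ≤ u_i. Assume u_1 ≥ u_2 ≥ … ≥ u_n. Then the greedy algorithm — which repeatedly takes the unassigned agents in order and forms the largest group {i, i+1, …, i+s−1} of consecutive remaining agents with u_{i+s−1} ≥ s (i.e., all members tolerate the group size), assigning them to a fresh copy, stopping after k groups or when no nonempty group can be formed — produces a maximum individually rational assignment: no individually rational assignment assigns strictly more agents to non-void activities. -/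
/-- The size of the group formed by the greedy algorithm when the (0-indexed)
agents i, i+1, …, n-1 remain, for thresholds u sorted non-increasingly: the
largest s with i + s ≤ n such that the last member tolerates a group of size s. -/
def greedySize (u : ℕ → ℕ) (n i : ℕ) : ℕ :=
  ((Finset.Icc 1 (n - i)).filter (fun s => s ≤ u (i + s - 1))).sup id

/-- Total number of agents assigned by the greedy algorithm, starting with the
agents i, i+1, …, n-1 unassigned and c copies of the activity remaining. -/
def greedyTotal (u : ℕ → ℕ) (n : ℕ) : ℕ → ℕ → ℕ
  | _, 0 => 0
  | i, c + 1 =>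
    if greedySize u n i = 0 then 0
    else greedySize u n i + greedyTotal u n (i + greedySize u n i) c

/-!
Optimality rests on two observations. First, sorting the group sizes of an individually
rational assignment decreasingly and laying the groups out as consecutive blocks of agents
`0, 1, …` keeps every block tolerated by its last member: the agents in groups of size at
least `s` are at least as many as the agents up to the end of the block of size `s`, and
all of them tolerate `s`, so by monotonicity of the thresholds so does the agent at the end
of that block. Second, greedy stays ahead of any sequence of tolerated consecutive blocks:
if a block ends beyond the current greedy boundary, its part beyond that boundary is itself
a tolerated block there, so the next greedy block ends at least as far.
-/

section Groups
variable {ι α : Type*} [Fintype ι] [DecidableEq α] (π : ι → Option α)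

lemma pairwiseDisjoint_grp (s : Set α) : s.PairwiseDisjoint (grp π) := by
  intro c _ c' _ hcc'
  refine Finset.disjoint_left.mpr fun a ha ha' => hcc' ?_
  simp only [grp, Finset.mem_filter] at ha ha'
  exact Option.some_injective _ (ha.2.symm.trans ha'.2)

lemma card_biUnion_grp [DecidableEq ι] (C : Finset α) :
    (C.biUnion (grp π)).card = ∑ c ∈ C, (grp π c).card :=
  Finset.card_biUnion (pairwiseDisjoint_grp π _)

lemma numActive_eq_sum_card_grp [Fintype α] : numActive π = ∑ c, (grp π c).card := by
  classical
  rw [numActive, ← card_biUnion_grp]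
  congr 1
  ext a
  cases h : π a <;> simp [grp, h]

end Groups

section Greedy
variable (u : ℕ → ℕ) (n : ℕ)

lemma greedySize_le (i : ℕ) : greedySize u n i ≤ n - i :=
  Finset.sup_le fun _ hs => (Finset.mem_Icc.mp (Finset.mem_filter.mp hs).1).2

lemma le_greedySize {i s : ℕ} (hs : 0 < s) (hsn : i + s ≤ n) (hsu : s ≤ u (i + s - 1)) :
    s ≤ greedySize u n i :=
  Finset.le_sup (f := id) (Finset.mem_filter.mpr ⟨Finset.mem_Icc.mpr ⟨hs, by omega⟩, hsu⟩)

lemma greedySize_le_u (i : ℕ) : greedySize u n i ≤ u (i + greedySize u n i - 1) := by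
  rcases (Finset.Icc 1 (n - i) |>.filter fun s => s ≤ u (i + s - 1)).eq_empty_or_nonempty
    with h | h
  · simp [greedySize, h]
  · obtain ⟨s, hs, hsup⟩ := Finset.exists_mem_eq_sup _ h id
    rw [greedySize, hsup]
    exact (Finset.mem_filter.mp hs).2

lemma greedyTotal_succ (i c : ℕ) :
    greedyTotal u n i (c + 1) = greedySize u n i + greedyTotal u n (i + greedySize u n i) c := by
  by_cases h : greedySize u n i = 0
  · cases c <;> simp [greedyTotal, h]
  · simp [greedyTotal, h]

lemma greedyTotal_succ' (i c : ℕ) :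
    greedyTotal u n i (c + 1) = greedyTotal u n i c + greedySize u n (i + greedyTotal u n i c) := by
  induction c generalizing i with
  | zero => rw [greedyTotal_succ]; simp [greedyTotal]
  | succ c ih => rw [greedyTotal_succ, ih, greedyTotal_succ, Nat.add_assoc, Nat.add_assoc]

lemma greedyTotal_monotone (i : ℕ) : Monotone (greedyTotal u n i) :=
  monotone_nat_of_le_succ fun c => (greedyTotal_succ' u n i c).symm ▸ Nat.le_add_right _ _

lemma greedyTotal_le (i c : ℕ) : greedyTotal u n i c ≤ n - i := by
  induction c with
  | zero => simp [greedyTotal]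
  | succ c ih =>
    have := greedySize_le u n (i + greedyTotal u n i c)
    rw [greedyTotal_succ']
    omega

/-- `BlocksFit u n i L`: the blocks of consecutive agents of sizes `L`, laid out from agent `i`
on, stay below `n`, and each nonempty block is tolerated by its last member. -/
def BlocksFit (u : ℕ → ℕ) (n : ℕ) : ℕ → List ℕ → Prop
  | _, [] => True
  | i, s :: L => (0 < s → i + s ≤ n ∧ s ≤ u (i + s - 1)) ∧ BlocksFit u n (i + s) L

lemma add_le_add_greedySize {p q s : ℕ} (hpq : p ≤ q)
    (hs : 0 < s → p + s ≤ n ∧ s ≤ u (p + s - 1)) : p + s ≤ q + greedySize u n q := by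
  by_cases hq : p + s ≤ q
  · omega
  · obtain ⟨hsn, hsu⟩ := hs (by omega)
    have := le_greedySize u n (i := q) (s := p + s - q) (by omega) (by omega)
      (by rw [show q + (p + s - q) - 1 = p + s - 1 by omega]; omega)
    omega

lemma BlocksFit.add_sum_le {L : List ℕ} {p q : ℕ} (hL : BlocksFit u n p L) (hpq : p ≤ q) :
    p + L.sum ≤ q + greedyTotal u n q L.length := by
  induction L generalizing p q with
  | nil => simpa [greedyTotal]
  | cons s L ih =>
    have := ih hL.2 (add_le_add_greedySize u n hpq hL.1)
    rw [List.sum_cons, List.length_cons, greedyTotal_succ]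
    omega

lemma blocksFit_of_pairwise (hu : Antitone u) {L : List ℕ} (hL : L.Pairwise (· ≥ ·)) {i : ℕ}
    (h : ∀ v, 0 < (L.filter (v ≤ ·)).sum →
      i + (L.filter (v ≤ ·)).sum ≤ n ∧ v ≤ u (i + (L.filter (v ≤ ·)).sum - 1)) :
    BlocksFit u n i L := by
  induction L generalizing i with
  | nil => trivial
  | cons s L ih =>
    obtain ⟨hsL, hL⟩ := List.pairwise_cons.mp hL
    have hfilter : ∀ v ≤ s, (s :: L).filter (v ≤ ·) = s :: L.filter (v ≤ ·) :=
      fun v hv => by simp [hv]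
    refine ⟨fun hs => ?_, ih hL fun v hv => ?_⟩
    · have := h s (by rw [hfilter s le_rfl, List.sum_cons]; omega)
      rw [hfilter s le_rfl, List.sum_cons] at this
      exact ⟨by omega, this.2.trans (hu (by omega))⟩
    · have hvs : v ≤ s := by
        by_contra! hsv
        rw [List.filter_eq_nil_iff.mpr fun b hb => by simpa using (hsL b hb).trans_lt hsv] at hv
        simp at hv
      have := h v (by rw [hfilter v hvs, List.sum_cons]; omega)
      rwa [hfilter v hvs, List.sum_cons, ← Nat.add_assoc] at this

end Greedy

section Optimality
variable {u : ℕ → ℕ} {n : ℕ}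

lemma le_apply_card_sub_one (hu : Antitone u) {B : Finset (Fin n)} (hB : B.Nonempty) {v : ℕ}
    (hv : ∀ a ∈ B, v ≤ u a) : v ≤ u (B.card - 1) := by
  obtain ⟨a, ha, hBa⟩ : ∃ a ∈ B, B.card - 1 ≤ a := by
    by_contra! h
    have := Finset.card_le_card_of_injOn Fin.val (t := Finset.range (B.card - 1))
      (fun a ha => Finset.mem_range.mpr (h a ha)) Fin.val_injective.injOn
    simp only [Finset.card_range] at this
    have := hB.card_pos
    omega
  exact (hv a ha).trans (hu hBa)

theorem numActive_le_greedyTotal {α : Type*} [Fintype α] [DecidableEq α] (hu : Antitone u)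
    (π : Fin n → Option α) (hπ : ∀ i c, π i = some c → (grp π c).card ≤ u i) :
    numActive π ≤ greedyTotal u n 0 (Fintype.card α) := by
  set g : α → ℕ := fun c => (grp π c).card
  set L := (Finset.univ.val.map g).sort (· ≥ ·)
  have hsum_filter (p : ℕ → Prop) [DecidablePred p] :
      (L.filter (p ·)).sum = ∑ c ∈ Finset.univ.filter (p ∘ g), g c := by
    rw [← Multiset.sum_coe, ← Multiset.filter_coe, Multiset.sort_eq, Multiset.filter_map]
    rfl
  have hfit : BlocksFit u n 0 L := blocksFit_of_pairwise u n hu (Multiset.pairwise_sort _ _)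
    fun v hv => by
      rw [hsum_filter (v ≤ ·), ← card_biUnion_grp] at hv ⊢
      rw [Nat.zero_add]
      refine ⟨by simpa using Finset.card_le_univ (α := Fin n) _,
        le_apply_card_sub_one hu (Finset.card_pos.mp hv) fun a ha => ?_⟩
      obtain ⟨c, hc, hac⟩ := Finset.mem_biUnion.mp ha
      exact (Finset.mem_filter.mp hc).2.trans (hπ a c (Finset.mem_filter.mp hac).2)
  have := hfit.add_sum_le u n le_rfl
  have hsum : L.sum = numActive π := by
    simpa [numActive_eq_sum_card_grp] using hsum_filter (fun _ => True)
  rwa [Nat.zero_add, Nat.zero_add, Multiset.length_sort, hsum, Multiset.card_map] at this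

end Optimality

section BlockAssignment
variable {T : ℕ → ℕ} {n k : ℕ}

variable (T n k) in
noncomputable def blockAssignment (a : Fin n) : Option (Fin k) :=
  if h : ∃ j : Fin k, T j ≤ a ∧ a < T (j + 1) then some h.choose else none

lemma blockAssignment_eq_some_iff (hT : Monotone T) {a : Fin n} {j : Fin k} :
    blockAssignment T n k a = some j ↔ T j ≤ a ∧ a < T (j + 1) := by
  have huniq : ∀ j j' : Fin k, a < T (j + 1) → T j' ≤ a → j' ≤ j := by
    intro j j' hj hj'
    by_contra! hlt
    have := hT (show (j : ℕ) + 1 ≤ j' from hlt)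
    omega
  unfold blockAssignment
  split_ifs with hex
  · refine ⟨fun h => Option.some_injective _ h ▸ hex.choose_spec, fun h => congrArg some ?_⟩
    exact le_antisymm (huniq _ _ h.2 hex.choose_spec.1) (huniq _ _ hex.choose_spec.2 h.1)
  · simpa using fun h₁ h₂ => hex ⟨j, h₁, h₂⟩

lemma card_filter_le_val_lt {p q : ℕ} (hq : q ≤ n) :
    (Finset.univ.filter fun a : Fin n => p ≤ a ∧ a < q).card = q - p := by
  rw [← Nat.card_Ico, ← Finset.card_map Fin.valEmbedding]
  congr 1
  ext m
  simp only [Finset.mem_map, Finset.mem_filter, Finset.mem_univ, true_and, Fin.valEmbedding_apply,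
    Finset.mem_Ico]
  exact ⟨fun ⟨a, h, ha⟩ => ha ▸ h, fun h => ⟨⟨m, by omega⟩, h, rfl⟩⟩

lemma card_grp_blockAssignment (hT : Monotone T) (hTn : T k ≤ n) (j : Fin k) :
    (grp (blockAssignment T n k) j).card = T (j + 1) - T j := by
  have : grp (blockAssignment T n k) j =
      Finset.univ.filter fun a : Fin n => T j ≤ a ∧ a < T (j + 1) := by
    ext a
    simp [grp, blockAssignment_eq_some_iff hT]
  rw [this, card_filter_le_val_lt ((hT j.isLt).trans hTn)]

lemma numActive_blockAssignment (hT : Monotone T) (hTn : T k ≤ n) :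
    numActive (blockAssignment T n k) = T k - T 0 := by
  rw [numActive_eq_sum_card_grp, ← Finset.sum_range_tsub hT k]
  simp only [card_grp_blockAssignment hT hTn]
  exact Fin.sum_univ_eq_sum_range (fun j => T (j + 1) - T j) k

lemma card_grp_blockAssignment_greedyTotal_le {u : ℕ → ℕ} (hu : Antitone u) {a : Fin n}
    {j : Fin k} (h : blockAssignment (greedyTotal u n 0) n k a = some j) :
    (grp (blockAssignment (greedyTotal u n 0) n k) j).card ≤ u a := by
  have hT := greedyTotal_monotone u n 0
  rw [blockAssignment_eq_some_iff hT, greedyTotal_succ'] at h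
  rw [card_grp_blockAssignment hT (by simpa using greedyTotal_le u n 0 k), greedyTotal_succ',
    Nat.add_sub_cancel_left]
  exact (greedySize_le_u u n _).trans (hu (by omega))

end BlockAssignment

theorem stmt9_general (n k : ℕ) (u : ℕ → ℕ) (hu : ∀ i j, i ≤ j → u j ≤ u i) :
    (∃ π : Fin n → Option (Fin k),
        (∀ (i : Fin n) (c : Fin k), π i = some c → (grp π c).card ≤ u (i : ℕ)) ∧
        numActive π = greedyTotal u n 0 k) ∧
      ∀ π : Fin n → Option (Fin k),
        (∀ (i : Fin n) (c : Fin k), π i = some c → (grp π c).card ≤ u (i : ℕ)) →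
        numActive π ≤ greedyTotal u n 0 k := by
  refine ⟨⟨blockAssignment (greedyTotal u n 0) n k,
    fun a j h => card_grp_blockAssignment_greedyTotal_le hu h, ?_⟩, fun π hπ => ?_⟩
  · rw [numActive_blockAssignment (greedyTotal_monotone u n 0)
      (by simpa using greedyTotal_le u n 0 k)]
    simp [greedyTotal]
  · simpa using numActive_le_greedyTotal hu π hπ

/-- Decreasing a-GASP with k pairwise equivalent copies of one activity, agent i
(0-indexed) approving exactly the group sizes 1, …, u i, with
u 0 ≥ u 1 ≥ … ≥ u (n-1): the greedy algorithm produces a maximum individually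
rational assignment, i.e. its number of active agents, greedyTotal u n 0 k, is
achieved by some individually rational assignment, and no individually rational
assignment assigns more agents to non-void activities. -/
theorem stmt9 (n k : ℕ) (u : ℕ → ℕ) (hu : ∀ i j, i ≤ j → u j ≤ u i)
    (hun : ∀ i, u i ≤ n) :
    (∃ π : Fin n → Option (Fin k),
        (∀ (i : Fin n) (c : Fin k), π i = some c → (grp π c).card ≤ u (i : ℕ)) ∧
        numActive π = greedyTotal u n 0 k) ∧
      ∀ π : Fin n → Option (Fin k),
        (∀ (i : Fin n) (c : Fin k), π i = some c → (grp π c).card ≤ u (i : ℕ)) →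
        numActive π ≤ greedyTotal u n 0 k :=
  stmt9_general n k u hu
end

section
/- Let (N, A, P) be an instance of a-GASP where A* consists of n pairwise equivalent copies of a single activity a (an ∞-copyable activity). Let π be an individually rational assignment produced by the greedy procedure that repeatedly assigns a maximum-cardinality individually-rational coalition of still-unassigned agents to a fresh copy of a, until no nonempty such coalition exists. Then for every individually rational assignment π* of this instance, #(π*) ≤ √n · #(π). -/
lemma numActive_eq_sum {n : ℕ} (π : Fin n → Option (Fin n)) :
    numActive π = ∑ j, (grp π j).card := by
  rw [numActive, ← Finset.card_biUnion]
  · congr 1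
    ext i
    simp only [Finset.mem_filter, Finset.mem_univ, true_and, Finset.mem_biUnion, grp,
      Option.ne_none_iff_exists']
  · intro a _ b _ hab
    simp only [Finset.disjoint_left, grp, Finset.mem_filter, Finset.mem_univ, true_and]
    intro i h1 h2
    rw [h1] at h2
    exact hab (Option.some.inj h2)

/-- √n-approximation: a-GASP with a single ∞-copyable activity (n copies for n
agents), where agent i approves exactly the group sizes in S' i. If π is an
individually rational assignment produced greedily — for each copy j, the group
assigned to copy j is a maximum-size individually rational coalition among the
agents not assigned to earlier copies — then any individually rational
assignment π* satisfies #(π*) ≤ √n · #(π). -/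
theorem stmt10 (n : ℕ) (S' : Fin n → Finset ℕ) (π πstar : Fin n → Option (Fin n))
    (hIR : ∀ (i : Fin n) (j : Fin n), π i = some j → (grp π j).card ∈ S' i)
    (hIRstar : ∀ (i : Fin n) (j : Fin n), πstar i = some j → (grp πstar j).card ∈ S' i)
    (hgreedy : ∀ (j : Fin n) (C : Finset (Fin n)),
      (∀ i ∈ C, C.card ∈ S' i) →
      (∀ i ∈ C, ∀ j' : Fin n, j' < j → π i ≠ some j') →
      C.card ≤ (grp π j).card) :
    (numActive πstar : ℝ) ≤ Real.sqrt n * numActive π := by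
  rcases Nat.eq_zero_or_pos n with hn | hn
  · subst hn
    have : numActive πstar = 0 := by
      simp [numActive, Finset.filter_eq_empty_iff]
    simp [this]
  -- general facts
  have hstar_le_n : numActive πstar ≤ n := by
    have := Finset.card_filter_le (Finset.univ : Finset (Fin n)) (fun i => πstar i ≠ none)
    simpa [numActive] using this
  set z : Fin n := ⟨0, hn⟩
  set m : ℕ := (grp π z).card with hm
  -- every IR star group has card ≤ m
  have hIRgrp : ∀ j : Fin n, ∀ i ∈ grp πstar j, (grp πstar j).card ∈ S' i := by
    intro j i hi
    simp only [grp, Finset.mem_filter, Finset.mem_univ, true_and] at hi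
    exact hIRstar i j hi
  have hstar_card : ∀ j : Fin n, (grp πstar j).card ≤ m := by
    intro j
    apply hgreedy z (grp πstar j) (hIRgrp j)
    intro i _ j' hj'
    exact absurd hj' (by simp [z, Fin.lt_def])
  have hm_le : m ≤ numActive π := by
    apply Finset.card_le_card
    intro i hi
    simp only [grp, Finset.mem_filter, Finset.mem_univ, true_and] at hi ⊢
    simp [numActive, hi]
  -- the key combinatorial bound
  have key : numActive πstar ≤ numActive π * numActive π := by
    by_cases hA : ∃ j : Fin n, (grp πstar j).Nonempty ∧ ∀ i ∈ grp πstar j, π i = none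
    · -- all π-groups are nonempty, so numActive π ≥ n
      obtain ⟨j, hjne, hjnone⟩ := hA
      have hall : ∀ j' : Fin n, 1 ≤ (grp π j').card := by
        intro j'
        calc 1 ≤ (grp πstar j).card := Finset.one_le_card.2 hjne
          _ ≤ (grp π j').card := by
            apply hgreedy j' (grp πstar j) (hIRgrp j)
            intro i hi j'' _
            rw [hjnone i hi]
            simp
      have hπn : n ≤ numActive π := by
        calc n = ∑ _j : Fin n, 1 := by simp
          _ ≤ ∑ j', (grp π j').card := Finset.sum_le_sum (fun j' _ => hall j')
          _ = numActive π := (numActive_eq_sum π).symm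
      calc numActive πstar ≤ n := hstar_le_n
        _ ≤ numActive π := hπn
        _ ≤ numActive π * numActive π := Nat.le_mul_of_pos_left _ (lt_of_lt_of_le hn hπn)
    · push_neg at hA
      -- every nonempty star group contains a π-active agent
      set T : Finset (Fin n) := Finset.univ.filter (fun j => (grp πstar j).Nonempty) with hT
      have hTcard : T.card ≤ numActive π := by
        classical
        have hwit : ∀ j ∈ T, ∃ i, i ∈ grp πstar j ∧ π i ≠ none := by
          intro j hj
          simp only [hT, Finset.mem_filter, Finset.mem_univ, true_and] at hj
          obtain ⟨i, hi, hne⟩ := hA j hj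
          exact ⟨i, hi, hne⟩
        set f : Fin n → Fin n := fun j =>
          if h : ∃ i, i ∈ grp πstar j ∧ π i ≠ none then h.choose else z with hf
        apply Finset.card_le_card_of_injOn f
        · intro j hj
          obtain ⟨i0, hi0⟩ := hwit j hj
          have hex : ∃ i, i ∈ grp πstar j ∧ π i ≠ none := ⟨i0, hi0⟩
          have hc := hex.choose_spec
          simp only [hf, dif_pos hex]
          simp [numActive, hc.2]
        · intro j1 hj1 j2 hj2 heq
          obtain ⟨i1, hi1⟩ := hwit j1 hj1
          obtain ⟨i2, hi2⟩ := hwit j2 hj2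
          have hex1 : ∃ i, i ∈ grp πstar j1 ∧ π i ≠ none := ⟨i1, hi1⟩
          have hex2 : ∃ i, i ∈ grp πstar j2 ∧ π i ≠ none := ⟨i2, hi2⟩
          have hc1 := hex1.choose_spec.1
          have hc2 := hex2.choose_spec.1
          simp only [hf, dif_pos hex1, dif_pos hex2] at heq
          rw [heq] at hc1
          simp only [grp, Finset.mem_filter, Finset.mem_univ, true_and] at hc1 hc2
          rw [hc1] at hc2
          exact Option.some.inj hc2
      calc numActive πstar = ∑ j, (grp πstar j).card := numActive_eq_sum πstar
        _ = ∑ j ∈ T, (grp πstar j).card := by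
          rw [Finset.sum_filter_of_ne]
          intro j _ hne
          exact Finset.card_pos.1 (Nat.pos_of_ne_zero hne)
        _ ≤ ∑ _j ∈ T, m := Finset.sum_le_sum (fun j _ => hstar_card j)
        _ = T.card * m := by rw [Finset.sum_const, smul_eq_mul]
        _ ≤ numActive π * numActive π := Nat.mul_le_mul hTcard hm_le
  -- conclude
  have h1 : (numActive πstar : ℝ) = Real.sqrt ((numActive πstar : ℝ) ^ 2) := by
    rw [Real.sqrt_sq (by positivity)]
  rw [h1]
  have h2 : ((numActive πstar : ℝ)) ^ 2 ≤ (n : ℝ) * (numActive π : ℝ) ^ 2 := by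
    have := mul_le_mul' hstar_le_n key
    have h3 : (numActive πstar * (numActive π * numActive π) : ℕ) = n * (numActive π * numActive π) * 1 → True := fun _ => trivial
    calc ((numActive πstar : ℝ)) ^ 2 = (numActive πstar : ℝ) * (numActive πstar : ℝ) := sq (numActive πstar : ℝ) ▸ (sq (numActive πstar : ℝ)).symm ▸ by ring
      _ ≤ (n : ℝ) * ((numActive π : ℝ) * (numActive π : ℝ)) := by
        exact_mod_cast this
      _ = (n : ℝ) * (numActive π : ℝ) ^ 2 := by ring
  calc Real.sqrt ((numActive πstar : ℝ) ^ 2) ≤ Real.sqrt ((n : ℝ) * (numActive π : ℝ) ^ 2) :=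
        Real.sqrt_le_sqrt h2
    _ = Real.sqrt n * numActive π := by
        rw [Real.sqrt_mul (by positivity), Real.sqrt_sq (by positivity)]
end

section
/- In the setting of the √n-approximation analysis: let π be a greedy individually rational assignment with active coalitions B_1,…,B_s (|B_1| ≥ … ≥ |B_s|) such that every nonempty individually rational coalition of agents unassigned by π is empty (greedy maximality), and let π* be any individually rational assignment with set of active coalitions 𝒞. Then every coalition C ∈ 𝒞 intersects some B_i, and if additionally |C| ≤ |B_1| for all C ∈ 𝒞, then #(π*) ≤ |B_1| · Σ_{i=1}^s |B_i| ≤ |B_1| · #(π). -/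
/-- A coalition C is individually rational when every member approves its size;
here S' i is the set of approved group sizes of agent i. -/
def IRCoal {ι : Type*} [DecidableEq ι] (S' : ι → Finset ℕ) (C : Finset ι) : Prop :=
  ∀ i ∈ C, C.card ∈ S' i

namespace Finset

variable {α ι κ : Type*} [DecidableEq α]

theorem exists_inter_nonempty_of_forall_disjoint_eq_empty {P : Finset α → Prop}
    {B : ι → Finset α} (hmax : ∀ C, P C → (∀ i, Disjoint C (B i)) → C = ∅)
    {C : Finset α} (hC : P C) (hne : C.Nonempty) : ∃ i, (C ∩ B i).Nonempty := by
  by_contra! h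
  exact hne.ne_empty <| hmax C hC fun i => disjoint_iff_inter_eq_empty.mpr (h i)

/-- Picking a point of `D k ∩ ⋃ B` for each `k` injects the pairwise disjoint family `D`
into `⋃ B`. -/
theorem card_le_sum_card_of_pairwise_disjoint_of_forall_inter_nonempty
    [Fintype ι] [Fintype κ] {B : ι → Finset α} {D : κ → Finset α}
    (hD : Pairwise (Function.onFun Disjoint D)) (hmeet : ∀ k, ∃ i, (D k ∩ B i).Nonempty) :
    Fintype.card κ ≤ ∑ i, (B i).card := by
  choose i x hx using hmeet
  have hxD k : x k ∈ D k := (mem_inter.mp (hx k)).1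
  have hxB k : x k ∈ B (i k) := (mem_inter.mp (hx k)).2
  have hinj : Function.Injective x := fun k l hkl => by
    by_contra hne
    exact disjoint_left.mp (hD hne) (hxD k) (hkl ▸ hxD l)
  calc Fintype.card κ ≤ (univ.biUnion B).card :=
        card_le_card_of_injOn x
          (fun k _ => mem_biUnion.mpr ⟨i k, mem_univ _, hxB k⟩) hinj.injOn
    _ ≤ ∑ i, (B i).card := card_biUnion_le

end Finset

open Finset

theorem stmt11_general (n s t : ℕ) (hs : 0 < s) (S' : Fin n → Finset ℕ)
    (B : Fin s → Finset (Fin n)) (D : Fin t → Finset (Fin n))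
    (hmax : ∀ C : Finset (Fin n), IRCoal S' C → (∀ i, Disjoint C (B i)) → C = ∅)
    (hDdisj : ∀ k l, k ≠ l → Disjoint (D k) (D l))
    (hDIR : ∀ k, IRCoal S' (D k))
    (hDne : ∀ k, (D k).Nonempty) :
    (∀ k, ∃ i, ((D k) ∩ (B i)).Nonempty) ∧
      ((∀ k, (D k).card ≤ (B ⟨0, hs⟩).card) →
        ∑ k, (D k).card ≤ (B ⟨0, hs⟩).card * ∑ i, (B i).card) := by
  have hmeet k : ∃ i, (D k ∩ B i).Nonempty :=
    exists_inter_nonempty_of_forall_disjoint_eq_empty hmax (hDIR k) (hDne k)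
  refine ⟨hmeet, fun hle => ?_⟩
  have ht : t ≤ ∑ i, (B i).card := by
    simpa using card_le_sum_card_of_pairwise_disjoint_of_forall_inter_nonempty
      hDdisj hmeet
  calc ∑ k, (D k).card ≤ t * (B ⟨0, hs⟩).card := by
        simpa using sum_le_card_nsmul univ _ _ fun k _ => hle k
    _ ≤ (B ⟨0, hs⟩).card * ∑ i, (B i).card := by
        rw [mul_comm]
        exact Nat.mul_le_mul_left _ ht

/-- Core counting argument of the √n-approximation: let B 0, …, B (s-1) be the
(pairwise disjoint, individually rational) active coalitions of a greedy
assignment π, with non-increasing sizes, such that B 0 is a maximum-size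
individually rational coalition and no nonempty individually rational coalition
disjoint from all the B i exists; let D 0, …, D (t-1) be the (pairwise disjoint,
nonempty, individually rational) active coalitions of any individually rational
assignment π*. Then every D k intersects some B i, and if moreover every D k
has size at most |B 0|, then #(π*) = Σ|D k| ≤ |B 0| · Σ|B i| = |B 0| · #(π). -/
theorem stmt11 (n s t : ℕ) (hs : 0 < s) (S' : Fin n → Finset ℕ)
    (B : Fin s → Finset (Fin n)) (D : Fin t → Finset (Fin n))
    (hBdisj : ∀ i j, i ≠ j → Disjoint (B i) (B j))
    (hBIR : ∀ i, IRCoal S' (B i))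
    (hBanti : ∀ i j : Fin s, i ≤ j → (B j).card ≤ (B i).card)
    (hmax : ∀ C : Finset (Fin n), IRCoal S' C → (∀ i, Disjoint C (B i)) → C = ∅)
    (hB0 : ∀ C : Finset (Fin n), IRCoal S' C → C.card ≤ (B ⟨0, hs⟩).card)
    (hDdisj : ∀ k l, k ≠ l → Disjoint (D k) (D l))
    (hDIR : ∀ k, IRCoal S' (D k))
    (hDne : ∀ k, (D k).Nonempty) :
    (∀ k, ∃ i, ((D k) ∩ (B i)).Nonempty) ∧
      ((∀ k, (D k).card ≤ (B ⟨0, hs⟩).card) →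
        ∑ k, (D k).card ≤ (B ⟨0, hs⟩).card * ∑ i, (B i).card) :=
  stmt11_general n s t hs S' B D hmax hDdisj hDIR hDne
end

section
/- If (N, A, P) is an instance of a-GASP in which the preferences of all agents are increasing with respect to all activities, then any individually rational assignment π in which two distinct activities a_j, a_ℓ ∈ A* are equivalent and both have nonempty groups π^j, π^ℓ can be transformed into an individually rational assignment π' with #(π') = #(π) in which all agents of π^j ∪ π^ℓ are assigned to a single one of the two activities. -/
/-- In an increasing a-GASP instance, if two distinct equivalent activities a and
b both have nonempty groups under an individually rational assignment π, then π
can be transformed, changing only the agents of those two groups, into an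
individually rational assignment π' with the same number of active agents in
which all agents of the two groups are assigned to a single one of the two
activities. -/
theorem stmt12 {ι α : Type*} [Fintype ι] [DecidableEq ι] [DecidableEq α]
    (S : ι → α → Finset ℕ)
    (hinc : ∀ (i : ι) (a : α), ∃ l : ℕ, 1 ≤ l ∧ S i a = Finset.Icc l (Fintype.card ι))
    (a b : α) (hab : a ≠ b) (hequiv : ∀ (i : ι), S i a = S i b)
    (π : ι → Option α) (hIR : IndivRat S π)
    (hane : (grp π a).Nonempty) (hbne : (grp π b).Nonempty) :
    ∃ π' : ι → Option α, IndivRat S π' ∧ numActive π' = numActive π ∧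
      (∀ i, i ∉ grp π a ∪ grp π b → π' i = π i) ∧
      ((∀ i ∈ grp π a ∪ grp π b, π' i = some a) ∨
        (∀ i ∈ grp π a ∪ grp π b, π' i = some b)) := by
  classical
  set π' : ι → Option α := fun i => if π i = some b then some a else π i with hπ'
  have hmemA : ∀ i, i ∈ grp π a ↔ π i = some a := by
    intro i; simp [grp]
  have hmemB : ∀ i, i ∈ grp π b ↔ π i = some b := by
    intro i; simp [grp]
  have hdisj : Disjoint (grp π a) (grp π b) := by
    rw [Finset.disjoint_left]
    intro i hia hib
    rw [hmemA] at hia; rw [hmemB] at hib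
    exact hab (by simpa [hia] using hib)
  have hga : grp π' a = grp π a ∪ grp π b := by
    ext i
    simp only [grp, Finset.mem_filter, Finset.mem_union, Finset.mem_univ, true_and, hπ']
    by_cases h : π i = some b <;> simp [h]
  have hgc : ∀ c, c ≠ a → c ≠ b → grp π' c = grp π c := by
    intro c hca hcb
    ext i
    simp only [grp, Finset.mem_filter, Finset.mem_univ, true_and, hπ']
    by_cases h : π i = some b
    · rw [if_pos h, h]
      simp only [Option.some_inj]
      constructor
      · exact fun hc => absurd hc (Ne.symm hca)
      · exact fun hc => absurd hc (Ne.symm hcb)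
    · rw [if_neg h]
  have hcardle : (grp π a ∪ grp π b).card ≤ Fintype.card ι := by
    simpa using Finset.card_le_card (Finset.subset_univ (grp π a ∪ grp π b))
  have hkey : ∀ i ∈ grp π a ∪ grp π b, (grp π a ∪ grp π b).card ∈ S i a := by
    intro i hi
    obtain ⟨l, hl1, hl⟩ := hinc i a
    have hsub : ∀ k m, k ∈ S i a → k ≤ m → m ≤ Fintype.card ι → m ∈ S i a := by
      intro k m hk hkm hm
      rw [hl] at hk ⊢
      exact Finset.mem_Icc.mpr ⟨(Finset.mem_Icc.mp hk).1.trans hkm, hm⟩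
    rcases Finset.mem_union.mp hi with hi | hi
    · exact hsub _ _ (hIR i a ((hmemA i).mp hi))
        (Finset.card_le_card Finset.subset_union_left) hcardle
    · have := hIR i b ((hmemB i).mp hi)
      rw [← hequiv] at this
      exact hsub _ _ this (Finset.card_le_card Finset.subset_union_right) hcardle
  refine ⟨π', ?_, ?_, ?_, Or.inl ?_⟩
  · intro i c hc
    by_cases hca : c = a
    · subst hca
      rw [hga]
      apply hkey
      simp only [hπ'] at hc
      by_cases h : π i = some b
      · simp [Finset.mem_union, hmemB, h]
      · rw [if_neg h] at hc
        simp [Finset.mem_union, hmemA, hc]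
    · have hcb : c ≠ b := by
        intro hcb
        rw [hcb] at hc
        simp only [hπ'] at hc
        by_cases h : π i = some b
        · rw [if_pos h] at hc
          exact hab (Option.some_inj.mp hc)
        · rw [if_neg h] at hc; exact h hc
      simp only [hπ'] at hc
      by_cases h : π i = some b
      · rw [if_pos h] at hc
        exact absurd (Option.some_inj.mp hc).symm hca
      · rw [if_neg h] at hc
        rw [hgc c hca hcb]
        exact hIR i c hc
  · unfold numActive
    congr 1
    ext i
    simp only [Finset.mem_filter, Finset.mem_univ, true_and, hπ']
    by_cases h : π i = some b <;> simp [h]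
  · intro i hi
    simp only [Finset.mem_union, hmemA, hmemB, not_or] at hi
    simp [hπ', hi.2]
  · intro i hi
    rcases Finset.mem_union.mp hi with hi | hi
    · have := (hmemA i).mp hi
      have hne : π i ≠ some b := by rw [this]; simp [hab]
      simp [hπ', hne, this]
    · simp [hπ', (hmemB i).mp hi]
end

section
/- In any instance of a-GASP where all agents have increasing preferences with respect to all activities, an assignment is individually stable if and only if it is Nash stable. (Individual stability: no agent assigned to a_∅ can join an existing group so that the mover approves the new alternative and no existing member of that group disapproves the resulting alternative.) -/
/-- Individual stability: individual rationality, and no agent assigned to the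
void activity can join an existing group so that the mover approves the new
alternative and no current member of the group disapproves it. -/
def IndivStable {ι α : Type*} [Fintype ι] [DecidableEq α]
    (S : ι → α → Finset ℕ) (π : ι → Option α) : Prop :=
  IndivRat S π ∧
    ¬ ∃ (i : ι) (a : α), π i = none ∧ (grp π a).card + 1 ∈ S i a ∧
        ∀ i' ∈ grp π a, (grp π a).card + 1 ∈ S i' a

/-- In an increasing a-GASP instance, an assignment is individually stable iff
it is Nash stable. -/
theorem stmt13 {ι α : Type*} [Fintype ι] [DecidableEq α]
    (S : ι → α → Finset ℕ)
    (hinc : ∀ (i : ι) (a : α), ∃ l : ℕ, 1 ≤ l ∧ S i a = Finset.Icc l (Fintype.card ι))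
    (π : ι → Option α) :
    IndivStable S π ↔ NashStable S π := by
  classical
  constructor
  · rintro ⟨hIR, hIS⟩
    refine ⟨hIR, fun i a hi hmem => ?_⟩
    -- group card + 1 ≤ Fintype.card ι since i ∉ grp π a
    have hinotin : i ∉ grp π a := by
      simp [grp, hi]
    have hcard : (grp π a).card + 1 ≤ Fintype.card ι := by
      have : (insert i (grp π a)).card ≤ Fintype.card ι :=
        Finset.card_le_univ _
      rwa [Finset.card_insert_of_notMem hinotin] at this
    apply hIS
    refine ⟨i, a, hi, hmem, fun i' hi' => ?_⟩
    obtain ⟨l, hl1, hS⟩ := hinc i' a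
    have hi'mem : (grp π a).card ∈ S i' a := by
      have : π i' = some a := by simpa [grp] using hi'
      exact hIR i' a this
    rw [hS] at hi'mem ⊢
    simp only [Finset.mem_Icc] at hi'mem ⊢
    exact ⟨le_trans hi'mem.1 (Nat.le_succ _), hcard⟩
  · rintro ⟨hIR, hNS⟩
    refine ⟨hIR, ?_⟩
    rintro ⟨i, a, hi, hmem, -⟩
    exact hNS i a hi hmem
end

section
/- Reduction correctness for Theorem 1 (perfect assignment vs. exact cover): Let X = {1,…,3q} and 𝒴 = {Y_1,…,Y_p} be a collection of 3-element subsets of X. Construct an a-GASP instance with N = X, A* = {a_1,…,a_p}, and S_i = {(a_j, k) : i ∈ Y_j, k ≥ 3}. Then there exists a subcollection of 𝒴 that exactly partitions X if and only if the a-GASP instance admits a perfect assignment (an individually rational assignment with no agent assigned to a_∅). -/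
/-- Correctness of the X3C reduction: given 3-element subsets Y 0, …, Y (p-1) of
X = {0, …, 3q-1}, the a-GASP instance with agents X, activities a_0, …, a_(p-1)
and agent i approving (a_j, k) iff i ∈ Y j and 3 ≤ k (≤ 3q) admits a perfect
assignment iff some subcollection of the Y j exactly covers X. -/
theorem stmt15 (q p : ℕ) (Y : Fin p → Finset (Fin (3 * q)))
    (hY : ∀ j, (Y j).card = 3) :
    (∃ T : Finset (Fin p), ∀ x : Fin (3 * q), ∃! j, j ∈ T ∧ x ∈ Y j) ↔
      ∃ π : Fin (3 * q) → Option (Fin p),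
        IndivRat (fun i j => if i ∈ Y j then Finset.Icc 3 (3 * q) else (∅ : Finset ℕ)) π ∧
        ∀ i, π i ≠ none := by
  constructor
  · rintro ⟨T, hT⟩
    choose f hf huniq using hT
    refine ⟨fun i => some (f i), ?_, fun i => by simp⟩
    intro i a hia
    simp only [Option.some.injEq] at hia
    subst hia
    have hgrp : grp (fun i => some (f i)) (f i) = Y (f i) := by
      ext x
      simp only [grp, Finset.mem_filter, Finset.mem_univ, true_and, Option.some.injEq]
      constructor
      · intro h; exact h ▸ (hf x).2
      · intro hx; exact (huniq x (f i) ⟨(hf i).1, hx⟩).symm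
    rw [hgrp, hY]
    have hq : 0 < 3 * q := i.pos
    simp only [(hf i).2, if_true, Finset.mem_Icc]
    omega
  · rintro ⟨π, hIR, hall⟩
    have key : ∀ j', (grp π j').Nonempty → grp π j' = Y j' := by
      rintro j' ⟨i, hi⟩
      simp only [grp, Finset.mem_filter, Finset.mem_univ, true_and] at hi
      have hsub : grp π j' ⊆ Y j' := by
        intro z hz
        simp only [grp, Finset.mem_filter, Finset.mem_univ, true_and] at hz
        have h2 := hIR z j' hz
        by_contra hne
        simp only [hne, if_false, Finset.notMem_empty] at h2
      have hcard := hIR i j' hi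
      have hmem : i ∈ Y j' := hsub (by simp [grp, hi])
      simp only [hmem, if_true, Finset.mem_Icc] at hcard
      exact Finset.eq_of_subset_of_card_le hsub (by rw [hY j']; exact hcard.1)
    refine ⟨Finset.univ.filter (fun j => (grp π j).Nonempty), fun x => ?_⟩
    obtain ⟨j, hj⟩ := Option.ne_none_iff_exists'.mp (hall x)
    have hxg : x ∈ grp π j := by simp [grp, hj]
    refine ⟨j, ⟨by simp only [Finset.mem_filter, Finset.mem_univ, true_and]; exact ⟨x, hxg⟩,
      (key j ⟨x, hxg⟩) ▸ hxg⟩, ?_⟩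
    rintro j' ⟨hj'T, hxY⟩
    simp only [Finset.mem_filter, Finset.mem_univ, true_and] at hj'T
    have hx : x ∈ grp π j' := (key j' hj'T) ▸ hxY
    simp only [grp, Finset.mem_filter, Finset.mem_univ, true_and, hj,
      Option.some.injEq] at hx
    exact hx.symm
end

section
/- Reduction correctness for Theorem 2 (perfect assignment vs. scheduling with makespan 2): Given n jobs, p machines, and processing times p_{ij} ∈ {1, 2, ∞}, construct an a-GASP instance with N = {1,…,n}, A* = {a_1,…,a_p}, and for each i, j: {k : (a_j,k) ∈ S_i} equals {1} if p_{ij} = 2, equals {1,2} if p_{ij} = 1, and equals ∅ if p_{ij} = ∞. Then there exists an assignment ρ of jobs to machines with Σ_{i : ρ(i)=j} p_{ij} ≤ 2 for every machine j if and only if the a-GASP instance admits a perfect assignment. -/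
open Finset

def approvedSizes (t : WithTop ℕ) : Finset ℕ :=
  if t = 2 then {1} else if t = 1 then {1, 2} else ∅

theorem mem_approvedSizes {c : ℕ} {t : WithTop ℕ} :
    c ∈ approvedSizes t ↔ c = 1 ∧ (t = 1 ∨ t = 2) ∨ c = 2 ∧ t = 1 := by
  unfold approvedSizes
  split_ifs <;> subst_vars <;> simp_all

section Load

variable {ι : Type*} {G : Finset ι} {t : ι → WithTop ℕ}

theorem card_mem_approvedSizes_of_sum_le_two [DecidableEq ι]
    (ht : ∀ k ∈ G, t k = 1 ∨ t k = 2 ∨ t k = ⊤)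
    (hsum : ∑ k ∈ G, t k ≤ 2) {k : ι} (hk : k ∈ G) : #G ∈ approvedSizes (t k) := by
  have hone : ∀ l ∈ G, 1 ≤ t l := fun l hl => by
    rcases ht l hl with h | h | h <;> simp [h]
  have hload : t k + #(G.erase k) ≤ 2 :=
    calc t k + #(G.erase k) = t k + ∑ _l ∈ G.erase k, 1 := by simp
      _ ≤ t k + ∑ l ∈ G.erase k, t l := by
        gcongr with l hl; exact hone l (mem_of_mem_erase hl)
      _ = ∑ l ∈ G, t l := add_sum_erase G t hk
      _ ≤ 2 := hsum
  rw [← card_erase_add_one hk, mem_approvedSizes]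
  rcases ht k hk with h | h | h <;> rw [h] at hload
  · have : 1 + #(G.erase k) ≤ 2 := by exact_mod_cast hload
    simp only [h, true_or, and_true]
    omega
  · have : 2 + #(G.erase k) ≤ 2 := by exact_mod_cast hload
    exact Or.inl ⟨by omega, Or.inr h⟩
  · simp at hload

theorem sum_le_two_of_forall_card_mem (h : ∀ k ∈ G, #G ∈ approvedSizes (t k)) :
    ∑ k ∈ G, t k ≤ 2 := by
  obtain rfl | ⟨k, hk⟩ := G.eq_empty_or_nonempty
  · simp
  rcases mem_approvedSizes.1 (h k hk) with ⟨hcard, htk⟩ | ⟨hcard, -⟩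
  · obtain ⟨l, rfl⟩ := card_eq_one.1 hcard
    rw [mem_singleton.1 hk] at htk
    rw [sum_singleton]
    rcases htk with h' | h' <;> simp [h']
  · have hunit : ∀ l ∈ G, t l = 1 := fun l hl => by
      rcases mem_approvedSizes.1 (h l hl) with ⟨h1, -⟩ | ⟨-, h1⟩
      · omega
      · exact h1
    rw [sum_congr rfl hunit, sum_const, hcard]
    simp

theorem sum_le_two_iff_forall_card_mem [DecidableEq ι]
    (ht : ∀ k ∈ G, t k = 1 ∨ t k = 2 ∨ t k = ⊤) :
    ∑ k ∈ G, t k ≤ 2 ↔ ∀ k ∈ G, #G ∈ approvedSizes (t k) :=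
  ⟨fun hsum _ => card_mem_approvedSizes_of_sum_le_two ht hsum, sum_le_two_of_forall_card_mem⟩

end Load

section Assignment

variable {ι α : Type*}

theorem exists_perfect_iff (P : (ι → Option α) → Prop) :
    (∃ π, P π ∧ ∀ i, π i ≠ none) ↔ ∃ ρ : ι → α, P fun i => some (ρ i) := by
  constructor
  · rintro ⟨π, hP, hπ⟩
    refine ⟨fun i => (π i).get (Option.isSome_iff_ne_none.2 (hπ i)), ?_⟩
    simpa only [Option.some_get] using hP
  · rintro ⟨ρ, hP⟩
    exact ⟨_, hP, fun _ => Option.some_ne_none _⟩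

variable [Fintype ι] [DecidableEq α]

theorem grp_some_comp (ρ : ι → α) (a : α) :
    grp (fun i => some (ρ i)) a = univ.filter fun i => ρ i = a := by
  simp [grp]

theorem indivRat_some_comp_iff (S : ι → α → Finset ℕ) (ρ : ι → α) :
    IndivRat S (fun i => some (ρ i)) ↔
      ∀ a, ∀ i ∈ univ.filter (fun i => ρ i = a), #(univ.filter fun i => ρ i = a) ∈ S i a := by
  simp only [IndivRat, grp_some_comp, Option.some.injEq, mem_filter, mem_univ, true_and]
  exact forall_comm

end Assignment

/-- Correctness of the scheduling reduction: jobs 0, …, n-1, machines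
0, …, p-1, processing times pt i j ∈ {1, 2, ∞}. There is a schedule of makespan
at most 2 iff the a-GASP instance in which agent i approves of activity a_j with
group sizes {1} if pt i j = 2, {1,2} if pt i j = 1, and ∅ if pt i j = ∞, admits
a perfect assignment. -/
theorem stmt16 (n p : ℕ) (pt : Fin n → Fin p → WithTop ℕ)
    (hpt : ∀ i j, pt i j = 1 ∨ pt i j = 2 ∨ pt i j = ⊤) :
    (∃ ρ : Fin n → Fin p, ∀ j : Fin p,
        ∑ i ∈ Finset.univ.filter (fun i => ρ i = j), pt i j ≤ (2 : WithTop ℕ)) ↔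
      ∃ π : Fin n → Option (Fin p),
        IndivRat (fun i j =>
          if pt i j = 2 then ({1} : Finset ℕ)
          else if pt i j = 1 then ({1, 2} : Finset ℕ) else ∅) π ∧
        ∀ i, π i ≠ none := by
  refine Iff.trans ?_
    (exists_perfect_iff fun π => IndivRat (fun i j => approvedSizes (pt i j)) π).symm
  refine exists_congr fun ρ => ?_
  rw [indivRat_some_comp_iff]
  exact forall_congr' fun j => sum_le_two_iff_forall_card_mem fun k _ => hpt k j
end
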